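/- arXiv:1210.5153 — 2 statements merged into one kernel-verified Lean document; each statement's English description precedes it below -/
import Mathlib

section
/- Fix positive reals μ, β, κ and set R₀ = β/(μ + κ). Define the 1D SIS Hamiltonian H(x_I, p_I) = β x_I (1 - x_I)(e^{p_I} - 1) + (μ + κ) x_I (e^{-p_I} - 1). Then for every x_I with 0 ≤ x_I < 1 and R₀(1 - x_I) > 0, the momentum p_I = -ln(R₀(1 - x_I)) satisfies H(x_I, p_I) = 0. That is, the optimal extinction path of the 1D SIS model is given explicitly by p_I(x_I) = -ln(R₀(1 - x_I)). -/
/-!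
At `p = -log (R₀ (1 - x))` we have `e^{-p} = R₀ (1 - x)` and `e^{p} = 1 / (R₀ (1 - x))`;
since `β (1 - x) = (μ + κ) R₀ (1 - x)`, both terms of the Hamiltonian become `±x (β (1 - x) - (μ + κ))`
and cancel.
-/

open Real

/-- The 1D SIS Hamiltonian `H(x, p)`, with `γ = μ + κ` the total removal rate. -/
noncomputable def sisHamiltonian (β γ x p : ℝ) : ℝ :=
  β * x * (1 - x) * (exp p - 1) + γ * x * (exp (-p) - 1)

theorem sisHamiltonian_eq_zero_of_exp_neg_eq {β γ x p : ℝ} (hp : exp (-p) = β / γ * (1 - x)) :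
    sisHamiltonian β γ x p = 0 := by
  have hne : β / γ * (1 - x) ≠ 0 := hp ▸ (exp_pos _).ne'
  have hγ : γ ≠ 0 := by rintro rfl; simp at hne
  have hβ : β ≠ 0 := by rintro rfl; simp at hne
  have hx : 1 - x ≠ 0 := right_ne_zero_of_mul hne
  have hexp : exp p = γ / (β * (1 - x)) := by
    rw [← inv_inv (exp p), ← exp_neg, hp]
    field_simp
  rw [sisHamiltonian, hexp, hp]
  field_simp
  ring

theorem sis_1d_optimal_path_zero_energy_general
    (μ β κ : ℝ)
    (R₀ : ℝ) (hR₀ : R₀ = β / (μ + κ)) :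
    ∀ xI : ℝ, 0 ≤ xI → xI < 1 → 0 < R₀ * (1 - xI) →
      β * xI * (1 - xI) * (Real.exp (-Real.log (R₀ * (1 - xI))) - 1)
        + (μ + κ) * xI * (Real.exp (-(-Real.log (R₀ * (1 - xI)))) - 1) = 0 := by
  intro xI _ _ hpos
  refine sisHamiltonian_eq_zero_of_exp_neg_eq ?_
  rw [neg_neg, exp_log hpos, hR₀]

/-- For the 1D SIS Hamiltonian
`H(x_I, p_I) = β x_I (1 - x_I)(e^{p_I} - 1) + (μ + κ) x_I (e^{-p_I} - 1)` with
`μ, β, κ > 0` and `R₀ = β/(μ + κ)`, for every `0 ≤ x_I < 1` with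
`R₀(1 - x_I) > 0`, the momentum `p_I = -ln(R₀(1 - x_I))` satisfies
`H(x_I, p_I) = 0`: the optimal extinction path is
`p_I(x_I) = -ln(R₀(1 - x_I))`. -/
theorem sis_1d_optimal_path_zero_energy
    (μ β κ : ℝ) (hμ : 0 < μ) (hβ : 0 < β) (hκ : 0 < κ)
    (R₀ : ℝ) (hR₀ : R₀ = β / (μ + κ)) :
    ∀ xI : ℝ, 0 ≤ xI → xI < 1 → 0 < R₀ * (1 - xI) →
      β * xI * (1 - xI) * (Real.exp (-Real.log (R₀ * (1 - xI))) - 1)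
        + (μ + κ) * xI * (Real.exp (-(-Real.log (R₀ * (1 - xI)))) - 1) = 0 :=
  sis_1d_optimal_path_zero_energy_general μ β κ R₀ hR₀
end

section
/- For every real R₀ > 1, the action along the optimal extinction path of the 1D SIS model satisfies R = ∫_{1 - 1/R₀}^{0} (-ln(R₀(1 - x))) dx = ln R₀ + 1/R₀ - 1. -/
/-!
The substitution `u = R₀ (1 - x)` maps `[1 - 1/R₀, 0]` onto `[1, R₀]` with `dx = -du / R₀`, so the
action is `R₀⁻¹ ∫₁^{R₀} log u du = R₀⁻¹ (R₀ log R₀ - R₀ + 1)`.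
-/

open Real

theorem intervalIntegral.integral_log_mul_one_sub {c : ℝ} (hc : c ≠ 0) (a b : ℝ) :
    ∫ x in a..b, log (c * (1 - x)) = c⁻¹ * ∫ u in c * (1 - b)..c * (1 - a), log u := by
  simp only [mul_one_sub]
  exact intervalIntegral.integral_comp_sub_mul (fun u => log u) hc c

/-- For every real `R₀ > 1`, the action along the optimal
extinction path of the 1D SIS model satisfies
`R = ∫_{1 - 1/R₀}^{0} (-ln(R₀(1 - x))) dx = ln R₀ + 1/R₀ - 1`. -/
theorem sis_1d_action_formula (R₀ : ℝ) (hR₀ : 1 < R₀) :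
    (∫ x in (1 - 1 / R₀)..(0 : ℝ), -Real.log (R₀ * (1 - x)))
      = Real.log R₀ + 1 / R₀ - 1 := by
  have hR₀' : R₀ ≠ 0 := by positivity
  have h_lower : R₀ * (1 - 0) = R₀ := by ring
  have h_upper : R₀ * (1 - (1 - 1 / R₀)) = 1 := by field_simp; ring
  rw [intervalIntegral.integral_neg, intervalIntegral.integral_log_mul_one_sub hR₀', h_lower,
    h_upper, integral_log, log_one]
  field_simp
  ring
end
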